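/- arXiv:1003.5565 — 2 statements merged into one kernel-verified Lean document; each statement's English description precedes it below -/
import Mathlib

section
/- For a smooth 2π-periodic support function h of a convex plane region containing the origin, the perimeter of the region equals ∫₀^{2π} h(φ) dφ (Cauchy's formula in the plane). -/
open Real

/-- Cauchy's formula in the plane: For a smooth `2π`-periodic support
function `h` (with `h + h'' ≥ 0`) of the convex plane region
`Ω = {(x,y) : ∀ φ, x cos φ + y sin φ ≤ h φ}` containing the origin, the perimeter of the
region — the arc length of its boundary curve
`C φ = (h cos φ - h' sin φ, h sin φ + h' cos φ)` — equals `∫₀^{2π} h(φ) dφ`. -/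
theorem cauchy_formula_plane
    (h : ℝ → ℝ) (hsmooth : ContDiff ℝ (⊤ : ℕ∞) h) (hper : Function.Periodic h (2 * π))
    (hconv : ∀ φ, 0 ≤ h φ + deriv (deriv h) φ)
    (hpos : ∀ φ, 0 < h φ)  -- the region contains the origin
    (Ω : Set (ℝ × ℝ))
    (hΩ : Ω = {p : ℝ × ℝ | ∀ φ, p.1 * cos φ + p.2 * sin φ ≤ h φ})
    (x y : ℝ → ℝ)
    (hx : ∀ φ, x φ = h φ * cos φ - deriv h φ * sin φ)
    (hy : ∀ φ, y φ = h φ * sin φ + deriv h φ * cos φ)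
    (perimeter : ℝ)
    (hper' : perimeter = ∫ φ in (0:ℝ)..(2 * π), Real.sqrt ((deriv x φ) ^ 2 + (deriv y φ) ^ 2)) :
    perimeter = ∫ φ in (0:ℝ)..(2 * π), h φ := by
  have hd1 : Differentiable ℝ h := hsmooth.differentiable (by simp)
  have hs : ContDiff ℝ (⊤ : ℕ∞) h := hsmooth.of_le (by simp)
  have hsmooth' : ContDiff ℝ (⊤ : ℕ∞) (deriv h) := (contDiff_infty_iff_deriv.mp hs).2
  have hd2 : Differentiable ℝ (deriv h) := hsmooth'.differentiable (by simp)
  have hxeq : x = fun φ => h φ * cos φ - deriv h φ * sin φ := funext hx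
  have hyeq : y = fun φ => h φ * sin φ + deriv h φ * cos φ := funext hy
  have hdx : ∀ φ, deriv x φ = -((h φ + deriv (deriv h) φ) * sin φ) := by
    intro φ
    rw [hxeq]
    rw [deriv_fun_sub ((hd1 φ).fun_mul (Real.differentiable_cos φ))
      ((hd2 φ).fun_mul (Real.differentiable_sin φ)),
      deriv_fun_mul (hd1 φ) (Real.differentiable_cos φ),
      deriv_fun_mul (hd2 φ) (Real.differentiable_sin φ),
      Real.deriv_cos, Real.deriv_sin]
    ring
  have hdy : ∀ φ, deriv y φ = (h φ + deriv (deriv h) φ) * cos φ := by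
    intro φ
    rw [hyeq]
    rw [deriv_fun_add ((hd1 φ).fun_mul (Real.differentiable_sin φ))
      ((hd2 φ).fun_mul (Real.differentiable_cos φ)),
      deriv_fun_mul (hd1 φ) (Real.differentiable_sin φ),
      deriv_fun_mul (hd2 φ) (Real.differentiable_cos φ),
      Real.deriv_cos, Real.deriv_sin]
    ring
  have hsq : ∀ φ, Real.sqrt ((deriv x φ) ^ 2 + (deriv y φ) ^ 2)
      = h φ + deriv (deriv h) φ := by
    intro φ
    rw [hdx, hdy]
    have : (-((h φ + deriv (deriv h) φ) * sin φ)) ^ 2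
        + ((h φ + deriv (deriv h) φ) * cos φ) ^ 2
        = (h φ + deriv (deriv h) φ) ^ 2 := by
      have := Real.sin_sq_add_cos_sq φ
      nlinarith [this]
    rw [this, Real.sqrt_sq (hconv φ)]
  rw [hper', intervalIntegral.integral_congr (fun φ _ => hsq φ)]
  have hctsh : Continuous h := hsmooth.continuous
  have hctsh2 : Continuous (deriv (deriv h)) :=
    ((contDiff_infty_iff_deriv.mp hsmooth').2).continuous
  rw [intervalIntegral.integral_add (hctsh.intervalIntegrable 0 (2*π))
    (hctsh2.intervalIntegrable 0 (2*π))]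
  have hint2 : (∫ φ in (0:ℝ)..(2*π), deriv (deriv h) φ) = deriv h (2*π) - deriv h 0 :=
    intervalIntegral.integral_deriv_eq_sub (fun φ _ => hd2 φ)
      (hctsh2.intervalIntegrable 0 (2*π))
  have hperd : deriv h (2*π) = deriv h 0 := by
    have he : (fun t => h (t + 2*π)) = h := funext hper
    have := deriv_comp_add_const h (2*π) 0
    rw [he] at this
    simpa using this.symm
  rw [hint2, hperd]
  ring
end

section
/- Minkowski's theorem via the Funk transform: Let Ω ⊂ ℝ³ be a compact convex body with smooth boundary and 0 in its interior, with width function B and circumference function U satisfying U(ω) = (1/2)∫_{S²∩ω^⊥} B ds. If U is constant on S², then B is constant on S²; conversely if B ≡ c then U ≡ πc. Hence Ω has constant width iff it has constant circumference. -/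
/-!
Fix a pole `p` and let `b a` be the integral of `B` over the circle of latitude `a` about `p`.
If every great circle integral of `B` equals `C`, integrating these over the great circles
whose poles lie on one circle of latitude and swapping the order of integration gives
`∫₀^{2π} b (s sin φ) dφ = 2πC` for `0 ≤ s ≤ 1`. This Abel-type equation for the even function
`b` is inverted by integrating once more over the sphere: by Archimedes' hat-box theorem
`t ∫_{S²} h (t x₂) = 4π ∫₀^t h` for even `h` (checked on even polynomials via Wallis' product,
then extended by Weierstrass approximation). Hence `b ≡ C` on `[0, 1]`, and `2π B p = b 1 = C`.
-/

open Real Metric intervalIntegral Set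
open scoped RealInnerProductSpace

/-- `∫_{S²} f (t x₂)`, in spherical coordinates. -/
noncomputable def axialSphereIntegral (f : ℝ → ℝ) (t : ℝ) : ℝ :=
  ∫ α in (0:ℝ)..π, sin α * ∫ φ in (0:ℝ)..2 * π, f (t * sin α * sin φ)

theorem integral_sin_pow_even_mul_integral_sin_pow_odd (n : ℕ) :
    (∫ x in (0:ℝ)..π, sin x ^ (2 * n)) * (∫ x in (0:ℝ)..π, sin x ^ (2 * n + 1))
      = 2 * π / (2 * n + 1) := by
  induction n with
  | zero => simp; ring
  | succ n ih =>
    rw [integral_sin_pow_even, integral_sin_pow_odd] at ih ⊢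
    rw [Finset.prod_range_succ, Finset.prod_range_succ]
    set P := ∏ i ∈ Finset.range n, (2 * (i : ℝ) + 1) / (2 * i + 2)
    set Q := ∏ i ∈ Finset.range n, (2 * (i : ℝ) + 2) / (2 * i + 3)
    calc _ = π * P * (2 * Q) * ((2 * n + 1) / (2 * n + 2) * ((2 * n + 2) / (2 * n + 3))) := by
          ring
      _ = _ := by rw [ih]; push_cast; field_simp; ring

theorem integral_sin_pow_even_zero_two_pi (n : ℕ) :
    ∫ x in (0:ℝ)..2 * π, sin x ^ (2 * n) = 2 * ∫ x in (0:ℝ)..π, sin x ^ (2 * n) := by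
  have hper : Function.Periodic (fun x => sin x ^ (2 * n)) π := fun x => by
    simp [sin_add_pi, pow_mul]
  rw [two_mul π, hper.intervalIntegral_add_eq_add 0 π
    (fun _ _ => (by fun_prop : Continuous _).intervalIntegrable _ _), zero_add]
  ring

theorem axialSphereIntegral_const_mul (a : ℝ) (f : ℝ → ℝ) (t : ℝ) :
    axialSphereIntegral (fun u => a * f u) t = a * axialSphereIntegral f t := by
  rw [axialSphereIntegral, axialSphereIntegral, ← integral_const_mul]
  refine integral_congr fun α _ => ?_
  rw [integral_const_mul]
  ring

theorem axialSphereIntegral_add {f g : ℝ → ℝ} (hf : Continuous f) (hg : Continuous g) (t : ℝ) :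
    axialSphereIntegral (fun u => f u + g u) t
      = axialSphereIntegral f t + axialSphereIntegral g t := by
  have hcont {k : ℝ → ℝ} (hk : Continuous k) :
      Continuous fun α => sin α * ∫ φ in (0:ℝ)..2 * π, k (t * sin α * sin φ) :=
    continuous_sin.mul (continuous_parametric_intervalIntegral_of_continuous' (by fun_prop) _ _)
  rw [axialSphereIntegral, axialSphereIntegral, axialSphereIntegral,
    ← integral_add ((hcont hf).intervalIntegrable _ _) ((hcont hg).intervalIntegrable _ _)]
  refine integral_congr fun α _ => ?_
  rw [← mul_add, ← integral_add (Continuous.intervalIntegrable (by fun_prop) _ _)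
    (Continuous.intervalIntegrable (by fun_prop) _ _)]

theorem mul_axialSphereIntegral_pow (n : ℕ) (t : ℝ) :
    t * axialSphereIntegral (· ^ (2 * n)) t = 4 * π * ∫ u in (0:ℝ)..t, u ^ (2 * n) := by
  have hJ : axialSphereIntegral (· ^ (2 * n)) t
      = t ^ (2 * n) * (2 * ∫ x in (0:ℝ)..π, sin x ^ (2 * n))
          * ∫ x in (0:ℝ)..π, sin x ^ (2 * n + 1) := by
    rw [axialSphereIntegral, ← integral_const_mul]
    refine integral_congr fun α _ => ?_
    simp only [mul_pow, integral_const_mul, integral_sin_pow_even_zero_two_pi]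
    ring
  rw [hJ, integral_pow]
  calc _ = 2 * t ^ (2 * n + 1) * ((∫ x in (0:ℝ)..π, sin x ^ (2 * n))
        * ∫ x in (0:ℝ)..π, sin x ^ (2 * n + 1)) := by ring
    _ = _ := by
      rw [integral_sin_pow_even_mul_integral_sin_pow_odd]; push_cast; field_simp; ring

theorem mul_axialSphereIntegral_eval_sq (p : Polynomial ℝ) (t : ℝ) :
    t * axialSphereIntegral (fun u => p.eval (u ^ 2)) t
      = 4 * π * ∫ u in (0:ℝ)..t, p.eval (u ^ 2) := by
  induction p using Polynomial.induction_on' with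
  | add p q hp hq =>
    simp only [Polynomial.eval_add]
    rw [axialSphereIntegral_add (by fun_prop) (by fun_prop),
      integral_add ((by fun_prop : Continuous _).intervalIntegrable _ _)
        ((by fun_prop : Continuous _).intervalIntegrable _ _)]
    linear_combination hp + hq
  | monomial n a =>
    simp only [Polynomial.eval_monomial, ← pow_mul]
    rw [axialSphereIntegral_const_mul, integral_const_mul]
    linear_combination a * mul_axialSphereIntegral_pow n t

theorem abs_axialSphereIntegral_le {f : ℝ → ℝ} {t ε : ℝ}
    (hf : ∀ u, |u| ≤ |t| → |f u| ≤ ε) : |axialSphereIntegral f t| ≤ 2 * π ^ 2 * ε := by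
  have hε : 0 ≤ ε := (abs_nonneg _).trans (hf 0 (by simp))
  have hinner (α : ℝ) : ‖sin α * ∫ φ in (0:ℝ)..2 * π, f (t * sin α * sin φ)‖ ≤ 2 * π * ε := by
    have hbound : ∀ φ, ‖f (t * sin α * sin φ)‖ ≤ ε := fun φ => hf _ <| by
      rw [abs_mul, abs_mul, mul_assoc]
      exact mul_le_of_le_one_right (abs_nonneg _)
        (mul_le_one₀ (abs_sin_le_one α) (abs_nonneg _) (abs_sin_le_one φ))
    have := norm_integral_le_of_norm_le_const (a := 0) (b := 2 * π) fun φ _ => hbound φ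
    rw [Real.norm_eq_abs, abs_mul]
    calc _ ≤ 1 * (ε * |2 * π - 0|) :=
          mul_le_mul (abs_sin_le_one α) this (abs_nonneg _) zero_le_one
      _ = 2 * π * ε := by rw [sub_zero, abs_of_pos two_pi_pos]; ring
  have := norm_integral_le_of_norm_le_const (a := 0) (b := π) fun α _ => hinner α
  rw [Real.norm_eq_abs, sub_zero, abs_of_pos pi_pos] at this
  exact this.trans_eq (by ring)

theorem mul_axialSphereIntegral_of_even {h : ℝ → ℝ} (hc : Continuous h) (he : ∀ u, h (-u) = h u)
    (t : ℝ) : t * axialSphereIntegral h t = 4 * π * ∫ u in (0:ℝ)..t, h u := by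
  refine eq_of_forall_dist_le fun ε hε => ?_
  set K := |t| * (2 * π ^ 2 + 4 * π) + 1
  have hK : 0 < K := by positivity
  obtain ⟨p, hp⟩ := exists_polynomial_near_of_continuousOn 0 (t ^ 2) (h ∘ sqrt)
    (hc.comp continuous_sqrt).continuousOn (ε / K) (by positivity)
  set d : ℝ → ℝ := fun u => h u - p.eval (u ^ 2)
  have hd : ∀ u, |u| ≤ |t| → |d u| ≤ ε / K := fun u hu => by
    have hsq : h (sqrt (u ^ 2)) = h u := by
      rw [sqrt_sq_eq_abs]; rcases abs_choice u with habs | habs <;> rw [habs]; exact he u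
    rw [abs_sub_comm, ← hsq]
    exact (hp _ ⟨sq_nonneg u, sq_le_sq.mpr hu⟩).le
  have hsplit : t * axialSphereIntegral h t - 4 * π * ∫ u in (0:ℝ)..t, h u
      = t * axialSphereIntegral d t - 4 * π * ∫ u in (0:ℝ)..t, d u := by
    have hdc : Continuous d := by fun_prop
    have hJ := axialSphereIntegral_add hdc (by fun_prop : Continuous fun u => p.eval (u ^ 2)) t
    have hI := integral_add (hdc.intervalIntegrable (μ := MeasureTheory.volume) 0 t)
      ((by fun_prop : Continuous fun u => p.eval (u ^ 2)).intervalIntegrable 0 t)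
    simp only [d, sub_add_cancel] at hJ hI
    rw [hJ, hI]
    linear_combination mul_axialSphereIntegral_eval_sq p t
  have hJd := abs_axialSphereIntegral_le hd
  have hId := norm_integral_le_of_norm_le_const (a := 0) (b := t) (f := d) fun u hu =>
    hd u <| by simpa using abs_sub_left_of_mem_uIcc (uIoc_subset_uIcc hu)
  rw [Real.norm_eq_abs, sub_zero] at hId
  rw [Real.dist_eq, hsplit]
  calc _ ≤ |t| * |axialSphereIntegral d t| + 4 * π * |∫ u in (0:ℝ)..t, d u| :=
        (abs_sub _ _).trans_eq <| by rw [abs_mul, abs_mul, abs_of_pos (by positivity : 0 < 4 * π)]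
    _ ≤ |t| * (2 * π ^ 2 * (ε / K)) + 4 * π * (ε / K * |t|) := by gcongr
    _ = (K - 1) * (ε / K) := by simp only [K]; ring
    _ ≤ K * (ε / K) := by gcongr; linarith
    _ = ε := by field_simp

theorem eqOn_zero_of_integral_comp_mul_sin_eq_zero {h : ℝ → ℝ} (hc : Continuous h)
    (he : ∀ u, h (-u) = h u)
    (hz : ∀ s ∈ Icc (0:ℝ) 1, ∫ φ in (0:ℝ)..2 * π, h (s * sin φ) = 0) :
    EqOn h 0 (Icc 0 1) := by
  have hJ : ∀ t ∈ Icc (0:ℝ) 1, axialSphereIntegral h t = 0 := fun t ht => by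
    rw [axialSphereIntegral]
    refine (integral_congr fun α hα => ?_).trans integral_zero
    rw [uIcc_of_le pi_pos.le] at hα
    have hsin := sin_nonneg_of_nonneg_of_le_pi hα.1 hα.2
    rw [hz _ ⟨mul_nonneg ht.1 hsin, mul_le_one₀ ht.2 hsin (sin_le_one α)⟩, mul_zero]
  have hF : EqOn (fun t => ∫ u in (0:ℝ)..t, h u) 0 (Icc 0 1) := fun t ht => by
    have := mul_axialSphereIntegral_of_even hc he t
    rw [hJ t ht, mul_zero, zero_eq_mul] at this
    exact this.resolve_left (by positivity)
  intro u hu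
  have hderiv := (hc.integral_hasStrictDerivAt 0 u).hasDerivAt.hasDerivWithinAt (s := Icc 0 1)
  exact (uniqueDiffOn_Icc_zero_one u hu).eq_deriv _
    (hderiv.congr (fun x hx => (hF hx).symm) (hF hu).symm)
    (hasDerivWithinAt_const u _ 0)

theorem integral_rotate_eq (f : ℝ → ℝ → ℝ) (x y : ℝ) :
    ∫ ψ in (0:ℝ)..2 * π, f (x * cos ψ - y * sin ψ) (x * sin ψ + y * cos ψ)
      = ∫ ψ in (0:ℝ)..2 * π, f (√(x ^ 2 + y ^ 2) * cos ψ) (√(x ^ 2 + y ^ 2) * sin ψ) := by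
  set z : ℂ := ⟨x, y⟩
  have hr : ‖z‖ = √(x ^ 2 + y ^ 2) := by
    rw [Complex.norm_def, Complex.normSq_mk]; ring_nf
  have hx : ‖z‖ * cos z.arg = x := Complex.norm_mul_cos_arg z
  have hy : ‖z‖ * sin z.arg = y := Complex.norm_mul_sin_arg z
  set g : ℝ → ℝ := fun ψ => f (‖z‖ * cos ψ) (‖z‖ * sin ψ)
  have hg : Function.Periodic g (2 * π) := fun ψ => by simp [g]
  calc _ = ∫ ψ in (0:ℝ)..2 * π, g (ψ + z.arg) := integral_congr fun ψ _ => by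
        simp only [g, cos_add, sin_add, ← hx, ← hy]; ring_nf
    _ = ∫ ψ in z.arg..z.arg + 2 * π, g ψ := by
        rw [integral_comp_add_right, zero_add, add_comm]
    _ = ∫ ψ in (0:ℝ)..2 * π, g ψ := by
        rw [hg.intervalIntegral_add_eq z.arg 0, zero_add]
    _ = _ := by simp only [g, hr]

section

variable {E : Type*} [NormedAddCommGroup E] [InnerProductSpace ℝ E]

structure IsOrthonormalFrame (ω e₁ e₂ : E) : Prop where
  norm_ω : ‖ω‖ = 1
  norm_e₁ : ‖e₁‖ = 1
  norm_e₂ : ‖e₂‖ = 1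
  inner_e₁_e₂ : ⟪e₁, e₂⟫ = 0
  inner_e₁_ω : ⟪e₁, ω⟫ = 0
  inner_e₂_ω : ⟪e₂, ω⟫ = 0

namespace IsOrthonormalFrame

variable {ω e₁ e₂ : E}

theorem inner_combination (hF : IsOrthonormalFrame ω e₁ e₂) (a x y a' x' y' : ℝ) :
    ⟪a • ω + x • e₁ + y • e₂, a' • ω + x' • e₁ + y' • e₂⟫ = a * a' + x * x' + y * y' := by
  have hωω : ⟪ω, ω⟫ = 1 := by rw [real_inner_self_eq_norm_sq, hF.norm_ω, one_pow]
  have h11 : ⟪e₁, e₁⟫ = 1 := by rw [real_inner_self_eq_norm_sq, hF.norm_e₁, one_pow]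
  have h22 : ⟪e₂, e₂⟫ = 1 := by rw [real_inner_self_eq_norm_sq, hF.norm_e₂, one_pow]
  simp only [inner_add_left, inner_add_right, real_inner_smul_left, real_inner_smul_right,
    real_inner_comm e₁ ω, real_inner_comm e₂ ω, real_inner_comm e₁ e₂, hωω, h11, h22,
    hF.inner_e₁_e₂, hF.inner_e₁_ω, hF.inner_e₂_ω]
  ring

theorem norm_combination (hF : IsOrthonormalFrame ω e₁ e₂) {a x y : ℝ}
    (h : a ^ 2 + x ^ 2 + y ^ 2 = 1) : ‖a • ω + x • e₁ + y • e₂‖ = 1 := by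
  rw [norm_eq_sqrt_real_inner, hF.inner_combination, ← sqrt_one]
  congr 1
  linear_combination h

theorem norm_cos_smul_add_sin_smul (hF : IsOrthonormalFrame ω e₁ e₂) (φ : ℝ) :
    ‖cos φ • e₁ + sin φ • e₂‖ = 1 := by
  simpa using hF.norm_combination (a := 0) (x := cos φ) (y := sin φ) (by simp)

/-- The pole `ω` turned through the angle `arccos t` towards `cos ψ • e₁ + sin ψ • e₂`. -/
theorem tilt (hF : IsOrthonormalFrame ω e₁ e₂) {s t : ℝ} (hst : s ^ 2 + t ^ 2 = 1) (ψ : ℝ) :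
    IsOrthonormalFrame (t • ω + (s * cos ψ) • e₁ + (s * sin ψ) • e₂)
      ((0:ℝ) • ω + (-sin ψ) • e₁ + cos ψ • e₂)
      (s • ω + (-(t * cos ψ)) • e₁ + (-(t * sin ψ)) • e₂) where
  norm_ω := hF.norm_combination <| by linear_combination s ^ 2 * sin_sq_add_cos_sq ψ + hst
  norm_e₁ := hF.norm_combination <| by linear_combination sin_sq_add_cos_sq ψ
  norm_e₂ := hF.norm_combination <| by linear_combination t ^ 2 * sin_sq_add_cos_sq ψ + hst
  inner_e₁_e₂ := by rw [hF.inner_combination]; ring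
  inner_e₁_ω := by rw [hF.inner_combination]; ring
  inner_e₂_ω := by rw [hF.inner_combination]; linear_combination (-(s * t)) * sin_sq_add_cos_sq ψ

end IsOrthonormalFrame

theorem exists_isOrthonormalFrame (hE : Module.finrank ℝ E = 3) {ω : E} (hω : ‖ω‖ = 1) :
    ∃ e₁ e₂ : E, IsOrthonormalFrame ω e₁ e₂ := by
  have : Fact (Module.finrank ℝ E = 2 + 1) := ⟨hE⟩
  have hne : ω ≠ 0 := by rintro rfl; simp at hω
  let b := OrthonormalBasis.fromOrthogonalSpanSingleton (𝕜 := ℝ) 2 hne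
  have hperp (i : Fin 2) : ⟪(b i : E), ω⟫ = 0 := by
    rw [real_inner_comm]; exact (b i).2 ω (Submodule.mem_span_singleton_self ω)
  exact ⟨b 0, b 1, hω, b.orthonormal.1 0, b.orthonormal.1 1,
    b.orthonormal.2 (by decide : (0 : Fin 2) ≠ 1), hperp 0, hperp 1⟩

noncomputable def latitudeIntegral (B : E → ℝ) (p e₁ e₂ : E) (a : ℝ) : ℝ :=
  ∫ ψ in (0:ℝ)..2 * π, B (a • p + (√(1 - a ^ 2) * cos ψ) • e₁ + (√(1 - a ^ 2) * sin ψ) • e₂)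

variable {B : E → ℝ} {p e₁ e₂ : E}

theorem continuous_latitudeIntegral (hB : Continuous B) :
    Continuous (latitudeIntegral B p e₁ e₂) :=
  continuous_parametric_intervalIntegral_of_continuous' (by fun_prop) _ _

theorem latitudeIntegral_neg (hBe : ∀ σ, B (-σ) = B σ) (a : ℝ) :
    latitudeIntegral B p e₁ e₂ (-a) = latitudeIntegral B p e₁ e₂ a := by
  set r := √(1 - a ^ 2)
  have hr : √((-r) ^ 2 + 0 ^ 2) = r := by simp [r, sqrt_sq (sqrt_nonneg _)]
  calc latitudeIntegral B p e₁ e₂ (-a)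
      = ∫ ψ in (0:ℝ)..2 * π, B (a • p + (-r * cos ψ - 0 * sin ψ) • e₁
          + (-r * sin ψ + 0 * cos ψ) • e₂) := integral_congr fun ψ _ => by
        rw [← hBe, neg_sq]; congr 1; module
    _ = latitudeIntegral B p e₁ e₂ a := by
        rw [integral_rotate_eq (fun x y => B (a • p + x • e₁ + y • e₂)), hr]; rfl

theorem latitudeIntegral_one : latitudeIntegral B p e₁ e₂ 1 = 2 * π * B p := by
  simp [latitudeIntegral]

/-- At angle `φ`, the great circles of the tilted frames `IsOrthonormalFrame.tilt` sweep the
circle of latitude `s sin φ` once as `ψ` runs over a period. -/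
theorem integral_tilt_eq_latitudeIntegral {s t : ℝ} (hst : s ^ 2 + t ^ 2 = 1) (φ : ℝ) :
    ∫ ψ in (0:ℝ)..2 * π, B (cos φ • ((0:ℝ) • p + (-sin ψ) • e₁ + cos ψ • e₂)
        + sin φ • (s • p + (-(t * cos ψ)) • e₁ + (-(t * sin ψ)) • e₂))
      = latitudeIntegral B p e₁ e₂ (s * sin φ) := by
  have hr : (-(t * sin φ)) ^ 2 + cos φ ^ 2 = 1 - (s * sin φ) ^ 2 := by
    linear_combination sin φ ^ 2 * hst + sin_sq_add_cos_sq φ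
  calc _ = ∫ ψ in (0:ℝ)..2 * π, B ((s * sin φ) • p
        + (-(t * sin φ) * cos ψ - cos φ * sin ψ) • e₁
        + (-(t * sin φ) * sin ψ + cos φ * cos ψ) • e₂) := integral_congr fun ψ _ => by
          congr 1; module
    _ = _ := by
        rw [integral_rotate_eq (fun x y => B ((s * sin φ) • p + x • e₁ + y • e₂)), hr]; rfl

theorem integral_latitudeIntegral_mul_sin (hB : Continuous B) (hF : IsOrthonormalFrame p e₁ e₂)
    {C : ℝ} (hC : ∀ ω f₁ f₂ : E, IsOrthonormalFrame ω f₁ f₂ →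
      ∫ φ in (0:ℝ)..2 * π, B (cos φ • f₁ + sin φ • f₂) = C)
    {s : ℝ} (hs : s ^ 2 ≤ 1) :
    ∫ φ in (0:ℝ)..2 * π, latitudeIntegral B p e₁ e₂ (s * sin φ) = 2 * π * C := by
  set t := √(1 - s ^ 2)
  have hst : s ^ 2 + t ^ 2 = 1 := by rw [sq_sqrt (by linarith)]; ring
  set G : ℝ → ℝ → ℝ := fun φ ψ => B (cos φ • ((0:ℝ) • p + (-sin ψ) • e₁ + cos ψ • e₂)
    + sin φ • (s • p + (-(t * cos ψ)) • e₁ + (-(t * sin ψ)) • e₂))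
  have hG : Continuous (Function.uncurry G) := hB.comp (by fun_prop)
  calc _ = ∫ φ in (0:ℝ)..2 * π, ∫ ψ in (0:ℝ)..2 * π, G φ ψ :=
        integral_congr fun φ _ => (integral_tilt_eq_latitudeIntegral hst φ).symm
    _ = ∫ ψ in (0:ℝ)..2 * π, ∫ φ in (0:ℝ)..2 * π, G φ ψ :=
        MeasureTheory.intervalIntegral_intervalIntegral_swap <|
          (hG.continuousOn.integrableOn_compact (isCompact_uIcc.prod isCompact_uIcc)).mono_set
            (prod_mono uIoc_subset_uIcc uIoc_subset_uIcc)
    _ = ∫ _ in (0:ℝ)..2 * π, C := integral_congr fun ψ _ => hC _ _ _ (hF.tilt hst ψ)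
    _ = 2 * π * C := by simp

theorem two_pi_mul_eq_of_integral_great_circle_eq (hB : Continuous B) (hBe : ∀ σ, B (-σ) = B σ)
    {C : ℝ} (hC : ∀ ω f₁ f₂ : E, IsOrthonormalFrame ω f₁ f₂ →
      ∫ φ in (0:ℝ)..2 * π, B (cos φ • f₁ + sin φ • f₂) = C)
    (hF : IsOrthonormalFrame p e₁ e₂) : 2 * π * B p = C := by
  have hb := continuous_latitudeIntegral (p := p) (e₁ := e₁) (e₂ := e₂) hB
  have := eqOn_zero_of_integral_comp_mul_sin_eq_zero
    (h := fun a => latitudeIntegral B p e₁ e₂ a - C) (hb.sub continuous_const)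
    (fun a => by rw [latitudeIntegral_neg hBe])
    (fun s hs => by
      rw [integral_sub (Continuous.intervalIntegrable (by fun_prop) _ _) intervalIntegrable_const,
        integral_latitudeIntegral_mul_sin hB hF hC (by nlinarith [hs.1, hs.2])]
      simp)
    (right_mem_Icc.2 zero_le_one)
  simpa [latitudeIntegral_one, sub_eq_zero] using this

end

/-- Minkowski's theorem via the Funk transform: Let `B` be the (continuous,
even) width function and `U` the circumference function of a compact convex body in `ℝ³`
with smooth boundary and `0` in its interior, related by `U ω = (1/2) ∫_{S² ∩ ω^⊥} B ds`
(the great circle being parametrized by arc length as `φ ↦ cos φ • e₁ + sin φ • e₂`).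
If `B ≡ c` then `U ≡ π c`; and `U` is constant on `S²` iff `B` is constant on `S²`:
the body has constant width iff it has constant circumference. -/
theorem minkowski_constant_width_iff_constant_circumference
    (B U : EuclideanSpace ℝ (Fin 3) → ℝ)
    (hBc : Continuous B) (hBe : ∀ σ, B (-σ) = B σ)
    (hrel : ∀ ω e₁ e₂ : EuclideanSpace ℝ (Fin 3),
      ‖ω‖ = 1 → ‖e₁‖ = 1 → ‖e₂‖ = 1 →
      ⟪e₁, e₂⟫ = 0 → ⟪e₁, ω⟫ = 0 → ⟪e₂, ω⟫ = 0 →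
      U ω = (1 / 2) * ∫ φ in (0:ℝ)..(2 * π), B (cos φ • e₁ + sin φ • e₂)) :
    (∀ c : ℝ, (∀ σ ∈ sphere (0 : EuclideanSpace ℝ (Fin 3)) 1, B σ = c) →
        ∀ ω ∈ sphere (0 : EuclideanSpace ℝ (Fin 3)) 1, U ω = π * c) ∧
    ((∃ c : ℝ, ∀ ω ∈ sphere (0 : EuclideanSpace ℝ (Fin 3)) 1, U ω = c) ↔
     (∃ c : ℝ, ∀ σ ∈ sphere (0 : EuclideanSpace ℝ (Fin 3)) 1, B σ = c)) := by
  have hE : Module.finrank ℝ (EuclideanSpace ℝ (Fin 3)) = 3 := by simp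
  have hcircle (ω e₁ e₂) (hF : IsOrthonormalFrame ω e₁ e₂) :
      ∫ φ in (0:ℝ)..2 * π, B (cos φ • e₁ + sin φ • e₂) = 2 * U ω := by
    rw [hrel ω e₁ e₂ hF.norm_ω hF.norm_e₁ hF.norm_e₂ hF.inner_e₁_e₂ hF.inner_e₁_ω hF.inner_e₂_ω]
    ring
  have constant_width (c : ℝ) (hB : ∀ σ ∈ sphere (0 : EuclideanSpace ℝ (Fin 3)) 1, B σ = c) :
      ∀ ω ∈ sphere (0 : EuclideanSpace ℝ (Fin 3)) 1, U ω = π * c := fun ω hω => by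
    obtain ⟨e₁, e₂, hF⟩ := exists_isOrthonormalFrame hE (mem_sphere_zero_iff_norm.mp hω)
    have h := hcircle ω e₁ e₂ hF
    rw [integral_congr fun φ _ =>
      hB _ (mem_sphere_zero_iff_norm.mpr (hF.norm_cos_smul_add_sin_smul φ))] at h
    simp only [integral_const, sub_zero, smul_eq_mul] at h
    linarith
  refine ⟨constant_width, fun ⟨c, hU⟩ => ⟨c / π, fun σ hσ => ?_⟩,
    fun ⟨c, hB⟩ => ⟨π * c, constant_width c hB⟩⟩
  obtain ⟨e₁, e₂, hF⟩ := exists_isOrthonormalFrame hE (mem_sphere_zero_iff_norm.mp hσ)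
  have h := two_pi_mul_eq_of_integral_great_circle_eq hBc hBe (C := 2 * c)
    (fun ω f₁ f₂ hF' => by
      rw [hcircle ω f₁ f₂ hF', hU ω (mem_sphere_zero_iff_norm.mpr hF'.norm_ω)]) hF
  field_simp
  linarith
end
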